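/- The odd writhe polynomial is additive under connected sum, independently of where the connected sum is performed: f_{K_a # K_b}(t) = f_{K_a}(t) + f_{K_b}(t). At the chord-diagram level: if a chord diagram D is the disjoint ordered concatenation of two chord diagrams D_a and D_b along the circle (no chord of D_a interlinks a chord of D_b), then f_D(t) = f_{D_a}(t) + f_{D_b}(t). -/

import Mathlib

open Finset LaurentPolynomial

/-- A signed, oriented chord diagram (combinatorial Gauss diagram) with `n` chords:
the `2*n` chord endpoints on the circle are the elements of `Fin (2*n)` in (positive)
cyclic order; chord `i` has over endpoint `c⁺ = ep (i, true)`, under endpoint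
`c⁻ = ep (i, false)` and a sign (writhe) `sign i ∈ {1, -1}`. -/
structure ChordDiagram (n : ℕ) where
  ep : Fin n × Bool ≃ Fin (2 * n)
  sign : Fin n → ℤ
  sign_unit : ∀ i, sign i = 1 ∨ sign i = -1

namespace ChordDiagram

variable {n : ℕ}

/-- the over endpoint `c⁺` of a chord -/
def overEnd (D : ChordDiagram n) (i : Fin n) : Fin (2 * n) := D.ep (i, true)

/-- the under endpoint `c⁻` of a chord -/
def under (D : ChordDiagram n) (i : Fin n) : Fin (2 * n) := D.ep (i, false)

/-- the number of steps from `b` to `x`, travelling in the positive direction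
around the circle -/
def relpos (b x : Fin (2 * n)) : ℕ := (x.val + 2 * n - b.val) % (2 * n)

/-- `x` lies strictly between the endpoints of chord `i`, on the side swept out
going from `c⁺` to `c⁻` in the positive direction -/
def StrictlyBetween (D : ChordDiagram n) (i : Fin n) (x : Fin (2 * n)) : Prop :=
  0 < relpos (D.overEnd i) x ∧ relpos (D.overEnd i) x < relpos (D.overEnd i) (D.under i)

instance (D : ChordDiagram n) (i : Fin n) (x : Fin (2 * n)) :
    Decidable (D.StrictlyBetween i x) := inferInstanceAs (Decidable (_ ∧ _))

/-- two distinct chords interlink if their endpoints alternate around the circle,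
i.e. exactly one endpoint of `j` lies strictly between the endpoints of `i` -/
def Interlinks (D : ChordDiagram n) (i j : Fin n) : Prop :=
  i ≠ j ∧ Xor (D.StrictlyBetween i (D.overEnd j)) (D.StrictlyBetween i (D.under j))

instance (D : ChordDiagram n) (i j : Fin n) : Decidable (D.Interlinks i j) :=
  inferInstanceAs (Decidable (_ ∧ _))

/-- the number of chords interlinking chord `i` -/
def interlinkCount (D : ChordDiagram n) (i : Fin n) : ℕ :=
  (univ.filter fun j => D.Interlinks i j).card

/-- the number of chord endpoints lying (strictly) on one side of chord `i` -/
def sideCount (D : ChordDiagram n) (i : Fin n) : ℕ :=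
  (univ.filter fun x => D.StrictlyBetween i x).card

/-- a chord is odd if it interlinks an odd number of other chords -/
def OddChord (D : ChordDiagram n) (i : Fin n) : Prop := Odd (D.interlinkCount i)

instance (D : ChordDiagram n) (i : Fin n) : Decidable (D.OddChord i) :=
  inferInstanceAs (Decidable (Odd _))

/-- The label `N(a)` of the arc whose terminal point is `a`: the sum of the signs of
all chords whose over endpoint is met strictly before their under endpoint when
traversing the circle once in the positive direction starting inside this arc. -/
def arcLabel (D : ChordDiagram n) (a : Fin (2 * n)) : ℤ :=
  ∑ i ∈ univ.filter fun i => relpos a (D.overEnd i) < relpos a (D.under i), D.sign i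

/-- The value `N(c)` of a chord: for a positive chord, the difference `x - y` of the
arc labels just before `c⁺` and just before `c⁻`; for a negative chord, the difference
`z - w` of the arc labels just after `c⁺` and just after `c⁻` (the label just after an
over endpoint is the label just before it minus the sign, and the label just after an
under endpoint is the label just before it plus the sign). -/
def chordVal (D : ChordDiagram n) (i : Fin n) : ℤ :=
  if D.sign i = 1 then D.arcLabel (D.overEnd i) - D.arcLabel (D.under i)
  else (D.arcLabel (D.overEnd i) - D.sign i) - (D.arcLabel (D.under i) + D.sign i)

/-- the odd writhe `J(K) = Σ_{c odd} w(c)` -/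
def oddWrithe (D : ChordDiagram n) : ℤ :=
  ∑ i ∈ univ.filter fun i => D.OddChord i, D.sign i

/-- the odd writhe polynomial `f_K(t) = Σ_{c odd} w(c) · t^{N(c)} ∈ ℤ[t,t⁻¹]` -/
noncomputable def owp (D : ChordDiagram n) : LaurentPolynomial ℤ :=
  ∑ i ∈ univ.filter fun i => D.OddChord i, C (D.sign i) * T (D.chordVal i)

/-- evaluation of the odd writhe polynomial at a rational number `x`:
`Σ_{c odd} w(c) · x^{N(c)}` -/
def owpEval (D : ChordDiagram n) (x : ℚ) : ℚ :=
  ∑ i ∈ univ.filter fun i => D.OddChord i, (D.sign i : ℚ) * x ^ D.chordVal i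

/-- the coefficient of `t^k` in a Laurent polynomial -/
def coeffOf (f : LaurentPolynomial ℤ) (k : ℤ) : ℤ := (AddMonoidAlgebra.coeff f) k

/-- the degree `Deg f = max { |i| : coefficient of tⁱ in f is nonzero }` -/
def owpDeg (f : LaurentPolynomial ℤ) : ℕ := (AddMonoidAlgebra.coeff f).support.sup fun k => k.natAbs

/-- reversing the orientation of the knot: the cyclic order of the endpoints is
reversed, while signs and over/under data of the crossings are preserved -/
def reverse (D : ChordDiagram n) : ChordDiagram n where
  ep := D.ep.trans Fin.revPerm
  sign := D.sign
  sign_unit := D.sign_unit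

/-- the mirror image: every crossing is switched, so every chord's over and under
endpoints are exchanged and its sign is negated -/
def mirror (D : ChordDiagram n) : ChordDiagram n where
  ep := (Equiv.prodCongr (Equiv.refl (Fin n))
      ⟨fun b => !b, fun b => !b, Bool.not_not, Bool.not_not⟩).trans D.ep
  sign := fun i => -D.sign i
  sign_unit := fun i => (D.sign_unit i).elim
    (fun h => Or.inr (show -D.sign i = -1 by rw [h]))
    (fun h => Or.inl (show -D.sign i = 1 by rw [h]; ring))

/-! ### Planarity via the Euler characteristic of the carrier surface

The diagram determines a 4-valent graph (vertices = chords, edges = the `2*n` arcs of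
the circle) together with a rotation system at each vertex, coming from the structure
of a transversal crossing: for a positive crossing the counterclockwise order of the
four ends is (over-out, under-out, over-in, under-in), for a negative crossing it is
(over-out, under-in, over-in, under-out).  The diagram is realizable by a classical
(planar) knot diagram iff the resulting closed oriented carrier surface is a sphere,
i.e. iff `V - E + F = n - 2n + F = 2`.

Darts are encoded as pairs `(p, io) : Fin (2*n) × Bool`, meaning the end of an arc
at the vertex through the circle point `p`, with `io = true` for the outgoing arc
(from `p` to `p+1`) and `io = false` for the incoming arc (from `p-1` to `p`). -/

/-- the other endpoint of the chord through a given endpoint -/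
def otherEnd (D : ChordDiagram n) (p : Fin (2 * n)) : Fin (2 * n) :=
  D.ep ((D.ep.symm p).1, !(D.ep.symm p).2)

lemma otherEnd_otherEnd (D : ChordDiagram n) (p : Fin (2 * n)) :
    D.otherEnd (D.otherEnd p) = p := by
  simp [otherEnd]

/-- whether the rotation at the vertex toggles the in/out marker when passing from
the end at `p` to the end at the other endpoint of its chord -/
def tog (D : ChordDiagram n) (p : Fin (2 * n)) : Bool :=
  if D.sign (D.ep.symm p).1 = 1 then !(D.ep.symm p).2 else (D.ep.symm p).2

/-- the vertex rotation permutation on darts -/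
def vertexPerm (D : ChordDiagram n) : Equiv.Perm (Fin (2 * n) × Bool) :=
  Equiv.trans
    ⟨fun x => (x.1, xor x.2 (D.tog x.1)), fun x => (x.1, xor x.2 (D.tog x.1)),
      fun x => by simp [Bool.xor_assoc], fun x => by simp [Bool.xor_assoc]⟩
    ⟨fun x => (D.otherEnd x.1, x.2), fun x => (D.otherEnd x.1, x.2),
      fun x => by simp [otherEnd_otherEnd], fun x => by simp [otherEnd_otherEnd]⟩

/-- the edge involution on darts, matching the two ends of each arc -/
def arcPerm (D : ChordDiagram n) : Equiv.Perm (Fin (2 * n) × Bool) :=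
  ⟨fun x => if x.2 then (finRotate (2 * n) x.1, false) else ((finRotate (2 * n)).symm x.1, true),
   fun x => if x.2 then (finRotate (2 * n) x.1, false) else ((finRotate (2 * n)).symm x.1, true),
   fun x => by rcases x with ⟨p, _ | _⟩ <;> simp only [Bool.false_eq_true, if_true, if_false, Equiv.symm_apply_apply, Equiv.apply_symm_apply],
   fun x => by rcases x with ⟨p, _ | _⟩ <;> simp only [Bool.false_eq_true, if_true, if_false, Equiv.symm_apply_apply, Equiv.apply_symm_apply]⟩

/-- the face permutation on darts -/
def facePerm (D : ChordDiagram n) : Equiv.Perm (Fin (2 * n) × Bool) :=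
  (D.arcPerm).trans D.vertexPerm

/-- the number of faces: the number of orbits of the face permutation -/
noncomputable def faceCount (D : ChordDiagram n) : ℕ :=
  Nat.card (MulAction.orbitRel.Quotient (Subgroup.zpowers D.facePerm) (Fin (2 * n) × Bool))

/-- the chord diagram arises from a classical (planar) knot diagram: the carrier
surface has Euler characteristic `V - E + F = n - 2n + faceCount = 2` -/
def PlanarRealizable (D : ChordDiagram n) : Prop := D.faceCount = n + 2

end ChordDiagram


open ChordDiagram

/-! Each summand occupies an arc of the circle that contains no endpoint of a chord of the
other summand. So a chord of one summand interlinks no chord of the other, and its parity is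
computed inside its summand; and the chords of the other summand shift the labels of all arcs
inside the summand by one and the same constant, which cancels in the differences `N(c)`. -/

namespace ChordDiagram

/-- `x` is met strictly before `y` when going around the circle upwards from `b`. -/
def CyclicLt (b x y : ℕ) : Prop := (b ≤ x ∧ (y < b ∨ x < y)) ∨ (x < y ∧ y < b)

variable {N k : ℕ}

theorem relpos_lt_relpos_iff (b x y : Fin (2 * N)) :
    relpos b x < relpos b y ↔ CyclicLt b x y := by
  have key : ∀ z : Fin (2 * N),
      relpos b z = if b.val ≤ z.val then z.val - b else z.val + 2 * N - b := fun z => by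
    unfold relpos
    split_ifs
    · rw [show z.val + 2 * N - b = z.val - b + 2 * N by omega, Nat.add_mod_right,
        Nat.mod_eq_of_lt (by omega)]
    · exact Nat.mod_eq_of_lt (by omega)
  have := b.isLt; have := x.isLt; have := y.isLt
  rw [key, key, CyclicLt]
  split_ifs <;> omega

theorem strictlyBetween_iff (D : ChordDiagram N) (i : Fin N) (x : Fin (2 * N)) :
    D.StrictlyBetween i x ↔
      CyclicLt (D.overEnd i) (D.overEnd i) x ∧ CyclicLt (D.overEnd i) x (D.under i) := by
  rw [StrictlyBetween, ← relpos_lt_relpos_iff, ← relpos_lt_relpos_iff]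
  simp [relpos]

theorem cyclicLt_add_iff (s b x y : ℕ) : CyclicLt (s + b) (s + x) (s + y) ↔ CyclicLt b x y := by
  unfold CyclicLt; omega

/-- `E` occupies the arc `[s, s + 2k)` of the circle of `D`, its chords relabelled by `ι`. -/
structure IsBlock (D : ChordDiagram N) (E : ChordDiagram k) (ι : Fin k → Fin N) (s : ℕ) :
    Prop where
  ep_val : ∀ j b, (D.ep (ι j, b)).val = s + (E.ep (j, b)).val
  sign_eq : ∀ j, D.sign (ι j) = E.sign j

namespace IsBlock

variable {D : ChordDiagram N} {E : ChordDiagram k} {ι : Fin k → Fin N} {s : ℕ}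

theorem overEnd_val (h : D.IsBlock E ι s) (j : Fin k) :
    (D.overEnd (ι j)).val = s + (E.overEnd j).val := h.ep_val j true

theorem under_val (h : D.IsBlock E ι s) (j : Fin k) :
    (D.under (ι j)).val = s + (E.under j).val := h.ep_val j false

theorem injective (h : D.IsBlock E ι s) : Function.Injective ι := by
  intro i j hij
  have := h.ep_val i true
  rw [hij, h.ep_val j true, Nat.add_left_cancel_iff, Fin.val_inj, E.ep.apply_eq_iff_eq] at this
  exact (Prod.ext_iff.1 this).1.symm

theorem ep_val_not_mem (h : D.IsBlock E ι s) {c : Fin N} (hc : c ∉ Set.range ι) (b : Bool) :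
    (D.ep (c, b)).val < s ∨ s + 2 * k ≤ (D.ep (c, b)).val := by
  by_contra! hin
  obtain ⟨⟨j, b'⟩, hj⟩ := E.ep.surjective ⟨(D.ep (c, b)).val - s, by omega⟩
  have : D.ep (ι j, b') = D.ep (c, b) := Fin.ext (by rw [h.ep_val, hj, Fin.val_mk]; omega)
  exact hc ⟨j, (Prod.ext_iff.1 (D.ep.injective this)).1⟩

theorem strictlyBetween_iff (h : D.IsBlock E ι s) (j : Fin k) {x : Fin (2 * N)}
    {x' : Fin (2 * k)} (hx : x.val = s + x'.val) :
    D.StrictlyBetween (ι j) x ↔ E.StrictlyBetween j x' := by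
  rw [ChordDiagram.strictlyBetween_iff, ChordDiagram.strictlyBetween_iff, h.overEnd_val,
    h.under_val, hx, cyclicLt_add_iff, cyclicLt_add_iff]

theorem interlinks_iff (h : D.IsBlock E ι s) (i j : Fin k) :
    D.Interlinks (ι i) (ι j) ↔ E.Interlinks i j := by
  rw [Interlinks, Interlinks, h.injective.ne_iff, h.strictlyBetween_iff i (h.overEnd_val j),
    h.strictlyBetween_iff i (h.under_val j)]

/-- A chord of `D` outside the block has both ends on the same side of every block chord. -/
theorem not_interlinks (h : D.IsBlock E ι s) (i : Fin k) {c : Fin N} (hc : c ∉ Set.range ι) :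
    ¬ D.Interlinks (ι i) c := by
  have side : ∀ b,
      D.StrictlyBetween (ι i) (D.ep (c, b)) ↔ (E.under i).val < (E.overEnd i).val := fun b => by
    have := h.ep_val_not_mem hc b
    have := (E.overEnd i).isLt; have := (E.under i).isLt
    rw [ChordDiagram.strictlyBetween_iff, h.overEnd_val, h.under_val]
    unfold CyclicLt; omega
  rintro ⟨-, hx⟩
  rw [overEnd, under, side, side] at hx
  exact hx.elim (fun h => h.2 h.1) (fun h => h.2 h.1)

theorem interlinkCount_eq (h : D.IsBlock E ι s) (i : Fin k) :
    D.interlinkCount (ι i) = E.interlinkCount i := by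
  rw [interlinkCount, interlinkCount, ← card_map ⟨ι, h.injective⟩]
  congr 1
  ext c
  simp only [mem_filter, mem_univ, true_and, mem_map, Function.Embedding.coeFn_mk]
  constructor
  · intro hc
    by_cases hr : c ∈ Set.range ι
    · obtain ⟨j, rfl⟩ := hr
      exact ⟨j, (h.interlinks_iff i j).1 hc, rfl⟩
    · exact absurd hc (h.not_interlinks i hr)
  · rintro ⟨j, hj, rfl⟩
    exact (h.interlinks_iff i j).2 hj

theorem oddChord_iff (h : D.IsBlock E ι s) (i : Fin k) : D.OddChord (ι i) ↔ E.OddChord i := by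
  rw [OddChord, OddChord, h.interlinkCount_eq]

/-- The chords outside the block contribute the same amount to the labels of all arcs inside
it, since the block contains none of their endpoints. -/
theorem arcLabel_sub_arcLabel (h : D.IsBlock E ι s) {x y : Fin (2 * N)} {x' y' : Fin (2 * k)}
    (hx : x.val = s + x'.val) (hy : y.val = s + y'.val) :
    D.arcLabel x - D.arcLabel y = E.arcLabel x' - E.arcLabel y' := by
  classical
  set S := univ.map ⟨ι, h.injective⟩
  have split : ∀ (z : Fin (2 * N)) (z' : Fin (2 * k)), z.val = s + z'.val →
      D.arcLabel z = E.arcLabel z' + ∑ c ∈ Sᶜ,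
        if CyclicLt z (D.overEnd c) (D.under c) then D.sign c else 0 := fun z z' hz => by
    simp only [arcLabel, sum_filter, relpos_lt_relpos_iff, ← S.sum_add_sum_compl, S, sum_map,
      Function.Embedding.coeFn_mk, h.overEnd_val, h.under_val, hz, cyclicLt_add_iff, h.sign_eq]
  have outer : ∀ c ∈ Sᶜ, CyclicLt x (D.overEnd c) (D.under c) ↔
      CyclicLt y (D.overEnd c) (D.under c) := fun c hc => by
    have hc : c ∉ Set.range ι := by simpa [S] using hc
    have := h.ep_val_not_mem hc true; have := h.ep_val_not_mem hc false
    have := x'.isLt; have := y'.isLt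
    rw [overEnd, under]; unfold CyclicLt; omega
  rw [split x x' hx, split y y' hy, sum_congr rfl fun c hc => if_congr (outer c hc) rfl rfl]
  ring

theorem chordVal_eq (h : D.IsBlock E ι s) (j : Fin k) : D.chordVal (ι j) = E.chordVal j := by
  have hlabel := h.arcLabel_sub_arcLabel (h.overEnd_val j) (h.under_val j)
  rw [chordVal, chordVal, h.sign_eq]
  split_ifs <;> linear_combination hlabel

end IsBlock

end ChordDiagram

/-- the odd writhe polynomial is additive under connected sum: if `D`
is the disjoint ordered concatenation of `Da` and `Db` along the circle, then
`f_D = f_{Da} + f_{Db}`. -/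
theorem stmt_14 {na nb : ℕ} (Da : ChordDiagram na) (Db : ChordDiagram nb)
    (D : ChordDiagram (na + nb))
    (hepa : ∀ (j : Fin na) (b : Bool),
      D.ep (Fin.castAdd nb j, b) = Fin.cast (by omega) (Fin.castAdd (2 * nb) (Da.ep (j, b))))
    (hepb : ∀ (j : Fin nb) (b : Bool),
      D.ep (Fin.natAdd na j, b) = Fin.cast (by omega) (Fin.natAdd (2 * na) (Db.ep (j, b))))
    (hsa : ∀ j, D.sign (Fin.castAdd nb j) = Da.sign j)
    (hsb : ∀ j, D.sign (Fin.natAdd na j) = Db.sign j) :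
    D.owp = Da.owp + Db.owp := by
  have hA : D.IsBlock Da (Fin.castAdd nb) 0 := ⟨fun j b => by simp [hepa], hsa⟩
  have hB : D.IsBlock Db (Fin.natAdd na) (2 * na) := ⟨fun j b => by simp [hepb], hsb⟩
  simp only [owp, sum_filter, Fin.sum_univ_add, hA.oddChord_iff, hA.sign_eq, hA.chordVal_eq,
    hB.oddChord_iff, hB.sign_eq, hB.chordVal_eq]
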